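/- For a prime p ≥ 5, let G_p = (ℤ/pℤ)² and τ_p = (p,p,p). Then there exist constants c_1, c_2 > 0 such that for all primes p ≥ 5, c_1 · χ(G_p;τ_p,τ_p)² ≤ h(G_p; τ_p, τ_p) ≤ c_2 · χ(G_p;τ_p,τ_p)², where χ(G_p;τ_p,τ_p) = p² · (3(1 − 1/p) − 2)² / 4 = (p−3)²/4. -/

import Mathlib

/-- A Hurwitz move: replaces consecutive entries `x, y` by `y, y⁻¹ * x * y`. -/
def HurwitzMove {G : Type*} [Group G] (L₁ L₂ : List G) : Prop :=
  ∃ (A B : List G) (x y : G), L₁ = A ++ x :: y :: B ∧ L₂ = A ++ y :: (y⁻¹ * x * y) :: B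

/-- A spherical system of generators of `G` of unordered type `τ`. -/
def SphSys {G : Type*} [Group G] (τ : List ℕ) (L : List G) : Prop :=
  L.prod = 1 ∧ Subgroup.closure {x | x ∈ L} = ⊤ ∧ List.Perm (L.map orderOf) τ

/-- `Σ(V)`: the union of all conjugates of all powers of the entries of `L`. -/
def SigmaSet {G : Type*} [Group G] (L : List G) : Set G :=
  {a | ∃ (g : G) (j : ℕ), ∃ x ∈ L, a = g * x ^ j * g⁻¹}

/-- `U(G;τ₁,τ₂)`: the set of unmixed ramification structures of type `(τ₁,τ₂)` on `G`. -/
def URam (G : Type*) [Group G] (τ₁ τ₂ : List ℕ) : Set (List G × List G) :=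
  {P | SphSys τ₁ P.1 ∧ SphSys τ₂ P.2 ∧ SigmaSet P.1 ∩ SigmaSet P.2 = {1}}

/-- The elementary relations on pairs of systems of generators: Hurwitz moves in either
component, a simultaneous automorphism of `G`, or the swap of the two components. -/
def RamRel {G : Type*} [Group G] (P Q : List G × List G) : Prop :=
  (HurwitzMove P.1 Q.1 ∧ P.2 = Q.2) ∨
  (P.1 = Q.1 ∧ HurwitzMove P.2 Q.2) ∨
  (∃ φ : G ≃* G, Q.1 = P.1.map φ ∧ Q.2 = P.2.map φ) ∨
  (Q = (P.2, P.1))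

/-- `h(G;τ₁,τ₂)`: the number of Hurwitz components, i.e. the number of orbits of
`U(G;τ₁,τ₂)` under the equivalence generated by `RamRel`. -/
noncomputable def hCount (G : Type*) [Group G] (τ₁ τ₂ : List ℕ) : ℕ :=
  Nat.card (Quot (fun P Q : ↥(URam G τ₁ τ₂) => RamRel P.1 Q.1))

/-- `χ(G;τ₁,τ₂)`, the Euler characteristic attached to `G` and a pair of types. -/
noncomputable def chiNum (G : Type*) [Group G] (τ₁ τ₂ : List ℕ) : ℝ :=
  (Nat.card G : ℝ) *
    (-2 + (τ₁.map (fun m => 1 - 1 / (m : ℝ))).sum) *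
    (-2 + (τ₂.map (fun m => 1 - 1 / (m : ℝ))).sum) / 4

/-- A type `τ = (m₁,…,m_r)` is hyperbolic if all `mᵢ ≥ 2` and `Σ (1 - 1/mᵢ) > 2`. -/
def IsHyperbolicType (τ : List ℕ) : Prop :=
  (∀ m ∈ τ, 2 ≤ m) ∧ 2 < (τ.map (fun m => 1 - 1 / (m : ℝ))).sum

/-!
Upper bound. Automorphisms of `G` act freely on `U(G;τ₁,τ₂)`, because the first system generates
`G`, and each class is a union of orbits, so `h · |Aut G| ≤ |U|`. For `G = (ℤ/p)²` a system of
three generators is determined by its first two entries, so `|U| ≤ p⁸`, while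
`|Aut G| = |GL₂(𝔽_p)| = (p² - 1)(p² - p)`.

Lower bound. `G` is abelian, so Hurwitz moves only permute the entries, and a class consists of
pairs obtained from one of its members by an automorphism, permutations of both systems and
possibly the swap: at most `2 · 3! · 3! · |Aut G|` of them. Together with the free action this
bounds the number of structures whose first system is the fixed
`V₁ = ((1,0), (0,1), (-1,-1))` by `72 h`. Such structures arise injectively from a nonzero
scalar and three distinct slopes `a, b, c ∉ {0, 1}`: take vectors on the lines of slopes `a, b, c`
summing to zero. Their powers meet those of `V₁`, which lie on the lines of slopes `0, ∞, 1`,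
only in `0`. Hence `(p - 1)(p - 2)(p - 3)(p - 4) ≤ 72 h`.
-/

open Function

section Abelian
variable {G : Type*} [CommGroup G]

theorem HurwitzMove.perm {L₁ L₂ : List G} (h : HurwitzMove L₁ L₂) : L₁.Perm L₂ := by
  obtain ⟨A, B, x, y, rfl, rfl⟩ := h
  rw [mul_comm y⁻¹, inv_mul_cancel_right]
  exact (List.Perm.swap y x B).append_left A

theorem sigmaSet_eq_powers (L : List G) :
    SigmaSet L = {a | ∃ x ∈ L, ∃ j : ℕ, a = x ^ j} := by
  ext a
  constructor
  · rintro ⟨g, j, x, hx, rfl⟩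
    exact ⟨x, hx, j, by rw [mul_right_comm, mul_inv_cancel, one_mul]⟩
  · rintro ⟨x, hx, j, rfl⟩
    exact ⟨1, j, x, hx, by simp⟩

theorem sigmaSet_inter_eq_singleton_one {L M : List G} (hL : L ≠ []) (hM : M ≠ [])
    (h : ∀ x ∈ L, ∀ y ∈ M, ∀ j k : ℕ, x ^ j = y ^ k → x ^ j = 1) :
    SigmaSet L ∩ SigmaSet M = {1} := by
  obtain ⟨x₀, hx₀⟩ := List.exists_mem_of_ne_nil L hL
  obtain ⟨y₀, hy₀⟩ := List.exists_mem_of_ne_nil M hM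
  rw [sigmaSet_eq_powers, sigmaSet_eq_powers]
  ext a
  simp only [Set.mem_inter_iff, Set.mem_ofPred_eq, Set.mem_singleton_iff]
  constructor
  · rintro ⟨⟨x, hx, j, rfl⟩, ⟨y, hy, k, hk⟩⟩
    exact h x hx y hy j k hk
  · rintro rfl
    exact ⟨⟨x₀, hx₀, 0, (pow_zero x₀).symm⟩, ⟨y₀, hy₀, 0, (pow_zero y₀).symm⟩⟩

end Abelian

section AutPerm
variable {G : Type*} [Group G]

def AutPerm (P Q : List G × List G) : Prop :=
  ∃ φ : G ≃* G, Q.1.Perm (P.1.map φ) ∧ Q.2.Perm (P.2.map φ)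

theorem AutPerm.of_perm {P Q : List G × List G} (h₁ : Q.1.Perm P.1) (h₂ : Q.2.Perm P.2) :
    AutPerm P Q :=
  ⟨MulEquiv.refl G, by simpa using h₁, by simpa using h₂⟩

theorem AutPerm.symm {P Q : List G × List G} (h : AutPerm P Q) : AutPerm Q P := by
  obtain ⟨φ, h₁, h₂⟩ := h
  exact ⟨φ.symm, by simpa [List.map_map] using (h₁.map φ.symm).symm,
    by simpa [List.map_map] using (h₂.map φ.symm).symm⟩

theorem AutPerm.trans {P Q R : List G × List G} (h : AutPerm P Q) (h' : AutPerm Q R) :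
    AutPerm P R := by
  obtain ⟨φ, h₁, h₂⟩ := h
  obtain ⟨ψ, h₁', h₂'⟩ := h'
  exact ⟨φ.trans ψ, by simpa [List.map_map] using h₁'.trans (h₁.map ψ),
    by simpa [List.map_map] using h₂'.trans (h₂.map ψ)⟩

theorem AutPerm.swap {P Q : List G × List G} (h : AutPerm P Q) : AutPerm P.swap Q.swap :=
  let ⟨φ, h₁, h₂⟩ := h
  ⟨φ, h₂, h₁⟩

theorem autPerm_or_swap_equivalence :
    Equivalence fun P Q : List G × List G => AutPerm P Q ∨ AutPerm P.swap Q where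
  refl _ := .inl (.of_perm (.refl _) (.refl _))
  symm
    | .inl h => .inl h.symm
    | .inr h => .inr (by simpa using h.symm.swap)
  trans
    | .inl h, .inl h' => .inl (h.trans h')
    | .inl h, .inr h' => .inr (h.swap.trans h')
    | .inr h, .inl h' => .inr (h.trans h')
    | .inr h, .inr h' => .inl (by simpa using h.swap.trans h')

end AutPerm

section AutPermFinset
variable {G : Type*} [Group G] [Fintype (G ≃* G)] [DecidableEq G]

def autPermFinset (P : List G × List G) : Finset (List G × List G) :=
  Finset.univ.biUnion fun φ : G ≃* G =>
    (P.1.map φ).permutations.toFinset ×ˢ (P.2.map φ).permutations.toFinset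

theorem mem_autPermFinset {P Q : List G × List G} (h : AutPerm P Q) : Q ∈ autPermFinset P := by
  obtain ⟨φ, h₁, h₂⟩ := h
  simp only [autPermFinset, Finset.mem_biUnion, Finset.mem_univ, true_and, Finset.mem_product,
    List.mem_toFinset, List.mem_permutations]
  exact ⟨φ, h₁, h₂⟩

theorem card_autPermFinset_le (P : List G × List G) :
    (autPermFinset P).card ≤
      Fintype.card (G ≃* G) * (P.1.length.factorial * P.2.length.factorial) := by
  refine Finset.card_biUnion_le.trans <| (Finset.sum_le_card_nsmul _ _
    (P.1.length.factorial * P.2.length.factorial) fun φ _ => ?_).trans_eq (by simp)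
  rw [Finset.card_product]
  refine Nat.mul_le_mul ((List.toFinset_card_le _).trans_eq ?_)
    ((List.toFinset_card_le _).trans_eq ?_) <;>
  rw [List.length_permutations, List.length_map]

end AutPermFinset

theorem RamRel.autPerm_or_swap {G : Type*} [CommGroup G] {P Q : List G × List G}
    (h : RamRel P Q) : AutPerm P Q ∨ AutPerm P.swap Q := by
  rcases h with ⟨hH, h₂⟩ | ⟨h₁, hH⟩ | ⟨φ, h₁, h₂⟩ | rfl
  · exact .inl (.of_perm hH.perm.symm (h₂ ▸ .refl _))
  · exact .inl (.of_perm (h₁ ▸ .refl _) hH.perm.symm)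
  · exact .inl ⟨φ, h₁ ▸ .refl _, h₂ ▸ .refl _⟩
  · exact .inr (.of_perm (.refl _) (.refl _))

theorem autPerm_or_swap_of_eqvGen {G : Type*} [CommGroup G] {τ₁ τ₂ : List ℕ}
    {A B : URam G τ₁ τ₂}
    (h : Relation.EqvGen (fun P Q : URam G τ₁ τ₂ => RamRel P.1 Q.1) A B) :
    AutPerm A.1 B.1 ∨ AutPerm A.1.swap B.1 := by
  induction h with
  | rel _ _ h => exact h.autPerm_or_swap
  | refl => exact autPerm_or_swap_equivalence.refl _
  | symm _ _ _ ih => exact autPerm_or_swap_equivalence.symm ih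
  | trans _ _ _ _ _ ih ih' => exact autPerm_or_swap_equivalence.trans ih ih'

section Automorphisms
variable {G H : Type*} [Group G] [Group H]

theorem SphSys.length_eq {τ : List ℕ} {L : List G} (h : SphSys τ L) : L.length = τ.length := by
  simpa using h.2.2.length_eq

theorem SphSys.map {τ : List ℕ} {L : List G} (φ : G ≃* H) (h : SphSys τ L) :
    SphSys τ (L.map φ) := by
  obtain ⟨hprod, hgen, hord⟩ := h
  refine ⟨by rw [← map_list_prod, hprod, map_one], ?_, ?_⟩
  · have himage : {x | x ∈ L.map φ} = φ '' {x | x ∈ L} := by ext; simp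
    have hmap := MonoidHom.map_closure φ.toMonoidHom {x | x ∈ L}
    rw [hgen, Subgroup.map_top_of_surjective _ φ.surjective] at hmap
    rw [himage]
    exact hmap.symm
  · simpa [List.map_map, Function.comp_def, MulEquiv.orderOf_eq] using hord

theorem sigmaSet_map (φ : G ≃* H) (L : List G) : SigmaSet (L.map φ) = φ '' SigmaSet L := by
  ext a
  constructor
  · rintro ⟨g, j, y, hy, rfl⟩
    obtain ⟨x, hx, rfl⟩ := List.mem_map.mp hy
    exact ⟨φ.symm g * x ^ j * (φ.symm g)⁻¹, ⟨φ.symm g, j, x, hx, rfl⟩, by simp⟩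
  · rintro ⟨b, ⟨g, j, x, hx, rfl⟩, rfl⟩
    exact ⟨φ g, j, φ x, List.mem_map_of_mem hx, by simp⟩

theorem map_mem_uRam {τ₁ τ₂ : List ℕ} {P : List G × List G} (φ : G ≃* G)
    (h : P ∈ URam G τ₁ τ₂) : Prod.map (List.map φ) (List.map φ) P ∈ URam G τ₁ τ₂ := by
  obtain ⟨h₁, h₂, hdisj⟩ := h
  refine ⟨h₁.map φ, h₂.map φ, ?_⟩
  simp only [Prod.map_fst, Prod.map_snd, sigmaSet_map, ← Set.image_inter φ.injective, hdisj,
    Set.image_singleton, map_one]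

theorem MulEquiv.eq_of_list_map_eq {L : List G} (hL : Subgroup.closure {x | x ∈ L} = ⊤)
    {φ ψ : G ≃* H} (h : L.map φ = L.map ψ) : φ = ψ :=
  MulEquiv.toMonoidHom_injective <|
    MonoidHom.eq_of_eqOn_dense hL fun x hx => List.map_inj_left.mp h x hx

end Automorphisms

section QuotientCounting
variable {X : Type*} [Finite X] (r : X → X → Prop)

theorem card_quot_mul_card_le {T : Type*} (f : T → X → X)
    (hr : ∀ t x, Quot.mk r (f t x) = Quot.mk r x) (hf : ∀ x, Injective fun t => f t x) :
    Nat.card (Quot r) * Nat.card T ≤ Nat.card X := by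
  rw [← Nat.card_prod]
  refine Nat.card_le_card_of_injective (fun qt => f qt.2 qt.1.out) ?_
  rintro ⟨q, t⟩ ⟨q', t'⟩ h
  have hq : q = q' :=
    calc q = Quot.mk r (f t q.out) := by rw [hr, Quot.out_eq]
      _ = Quot.mk r (f t' q'.out) := congrArg _ h
      _ = q' := by rw [hr, Quot.out_eq]
  subst hq
  exact Prod.ext rfl (hf _ h)

theorem card_le_card_quot_mul {N : ℕ}
    (hN : ∀ x, Nat.card {y // Quot.mk r y = Quot.mk r x} ≤ N) :
    Nat.card X ≤ Nat.card (Quot r) * N := by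
  have := Fintype.ofFinite (Quot r)
  rw [← Nat.card_congr (Equiv.sigmaFiberEquiv (Quot.mk r)), Nat.card_sigma,
    Nat.card_eq_fintype_card (α := Quot r), ← Finset.card_univ, ← smul_eq_mul]
  refine Finset.sum_le_card_nsmul _ _ N fun q _ => ?_
  obtain ⟨x, rfl⟩ := Quot.exists_rep q
  exact hN x

end QuotientCounting

section Counting
variable {G : Type*} [Group G] {τ₁ τ₂ : List ℕ}

open Equiv.Perm in
def URam.toVectors (A : URam G τ₁ τ₂) :
    vectorsProdEqOne G τ₁.length × vectorsProdEqOne G τ₂.length :=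
  (⟨⟨A.1.1, A.2.1.length_eq⟩, A.2.1.1⟩, ⟨⟨A.1.2, A.2.2.1.length_eq⟩, A.2.2.1.1⟩)

theorem URam.toVectors_injective :
    Injective (URam.toVectors (G := G) (τ₁ := τ₁) (τ₂ := τ₂)) :=
  fun _ _ h => Subtype.ext <| Prod.ext
    (congrArg (fun v => v.1.1.1) h) (congrArg (fun v => v.2.1.1) h)

variable [Finite G]

instance : Finite (URam G τ₁ τ₂) :=
  have := Fintype.ofFinite G
  Finite.of_injective _ URam.toVectors_injective

theorem card_uRam_le :
    Nat.card (URam G τ₁ τ₂) ≤ Nat.card G ^ (τ₁.length - 1 + (τ₂.length - 1)) := by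
  have := Fintype.ofFinite G
  refine (Nat.card_le_card_of_injective _ URam.toVectors_injective).trans_eq ?_
  rw [Nat.card_prod, Nat.card_eq_fintype_card, Nat.card_eq_fintype_card,
    Nat.card_eq_fintype_card, Equiv.Perm.VectorsProdEqOne.card, Equiv.Perm.VectorsProdEqOne.card,
    pow_add]

theorem hCount_mul_card_mulAut_le :
    hCount G τ₁ τ₂ * Nat.card (G ≃* G) ≤ Nat.card (URam G τ₁ τ₂) :=
  card_quot_mul_card_le _ (fun φ A => ⟨_, map_mem_uRam φ A.2⟩)
    (fun φ _ => (Quot.sound (.inr (.inr (.inl ⟨φ, rfl, rfl⟩)))).symm)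
    (fun A _ _ h => MulEquiv.eq_of_list_map_eq A.2.1.2.1 (congrArg (fun B => B.1.1) h))

theorem card_mulAut_mul_card_fiber_le {V : List G} (hV : Subgroup.closure {x | x ∈ V} = ⊤) :
    Nat.card (G ≃* G) * Nat.card {A : URam G τ₁ τ₂ // A.1.1 = V} ≤
      Nat.card (URam G τ₁ τ₂) := by
  rw [← Nat.card_prod]
  refine Nat.card_le_card_of_injective (fun φA => ⟨_, map_mem_uRam φA.1 φA.2.1.2⟩) ?_
  rintro ⟨φ, A, hA⟩ ⟨ψ, B, hB⟩ h
  have h₁ : V.map φ = V.map ψ := by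
    have := congrArg (fun C => C.1.1) h
    simpa only [Prod.map_fst, hA, hB] using this
  obtain rfl := MulEquiv.eq_of_list_map_eq hV h₁
  have h₂ : A.1.2 = B.1.2 :=
    List.map_injective_iff.mpr φ.injective (congrArg (fun C => C.1.2) h)
  exact Prod.ext rfl (Subtype.ext (Subtype.ext (Prod.ext (hA.trans hB.symm) h₂)))

end Counting

section AbelianCounting
variable {G : Type*} [CommGroup G] [Finite G] {τ₁ τ₂ : List ℕ}

theorem card_ramClass_le (A : URam G τ₁ τ₂) :
    Nat.card {B // Quot.mk (fun P Q : URam G τ₁ τ₂ => RamRel P.1 Q.1) B = Quot.mk _ A} ≤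
      2 * (Nat.card (G ≃* G) * (τ₁.length.factorial * τ₂.length.factorial)) := by
  classical
  have := Fintype.ofFinite (G ≃* G)
  have hlen₁ := A.2.1.length_eq
  have hlen₂ := A.2.2.1.length_eq
  let S := autPermFinset A.1 ∪ autPermFinset A.1.swap
  have hS : S.card ≤ 2 * (Nat.card (G ≃* G) * (τ₁.length.factorial * τ₂.length.factorial)) := by
    refine (Finset.card_union_le _ _).trans ?_
    have h₁ := card_autPermFinset_le A.1
    have h₂ := card_autPermFinset_le A.1.swap
    rw [← Nat.card_eq_fintype_card, hlen₁, hlen₂] at h₁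
    rw [← Nat.card_eq_fintype_card, Prod.fst_swap, Prod.snd_swap, hlen₁, hlen₂,
      mul_comm τ₂.length.factorial] at h₂
    omega
  refine (Nat.card_le_card_of_injective (β := S) (fun B => ⟨B.1.1, ?_⟩) ?_).trans ?_
  · rcases autPerm_or_swap_of_eqvGen (Quot.eqvGen_exact B.2).symm with h | h
    · exact Finset.mem_union_left _ (mem_autPermFinset h)
    · exact Finset.mem_union_right _ (mem_autPermFinset h)
  · intro B C h
    simp only [Subtype.mk.injEq] at h
    exact Subtype.ext (Subtype.ext h)
  · simpa using hS

theorem card_uRam_le_hCount_mul :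
    Nat.card (URam G τ₁ τ₂) ≤
      hCount G τ₁ τ₂ * (2 * (Nat.card (G ≃* G) * (τ₁.length.factorial * τ₂.length.factorial))) :=
  card_le_card_quot_mul _ card_ramClass_le

theorem card_fiber_le_hCount_mul {V : List G} (hV : Subgroup.closure {x | x ∈ V} = ⊤) :
    Nat.card {A : URam G τ₁ τ₂ // A.1.1 = V} ≤
      hCount G τ₁ τ₂ * (2 * (τ₁.length.factorial * τ₂.length.factorial)) := by
  refine Nat.le_of_mul_le_mul_left ?_ (Nat.card_pos (α := G ≃* G))
  calc _ ≤ Nat.card (URam G τ₁ τ₂) := card_mulAut_mul_card_fiber_le hV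
    _ ≤ _ := card_uRam_le_hCount_mul
    _ = _ := by ring

end AbelianCounting

open Multiplicative

abbrev Gp (p : ℕ) := Multiplicative (ZMod p) × Multiplicative (ZMod p)

namespace Gp
variable {p : ℕ}

def mk (x y : ZMod p) : Gp p := (ofAdd x, ofAdd y)

theorem mk_mul (x y x' y' : ZMod p) : mk x y * mk x' y' = mk (x + x') (y + y') := rfl

theorem one_eq_mk : (1 : Gp p) = mk 0 0 := rfl

theorem mk_toAdd (g : Gp p) : mk (toAdd g.1) (toAdd g.2) = g := rfl

theorem mk_eq_mk {x y x' y' : ZMod p} : mk x y = mk x' y' ↔ x = x' ∧ y = y' := by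
  simp [mk]

theorem mk_pow (x y : ZMod p) (n : ℕ) :
    mk x y ^ n = mk ((n : ZMod p) * x) ((n : ZMod p) * y) := by
  simp [mk, ← ofAdd_nsmul, nsmul_eq_mul]

variable [Fact p.Prime]

theorem orderOf_mk {x y : ZMod p} (h : ¬(x = 0 ∧ y = 0)) : orderOf (mk x y) = p := by
  refine orderOf_eq_prime ?_ fun h1 => h ?_
  · simp [mk_pow, one_eq_mk]
  · rwa [one_eq_mk, mk_eq_mk] at h1

theorem closure_eq_top_of_det {x₁ y₁ x₂ y₂ : ZMod p} (hdet : x₁ * y₂ - x₂ * y₁ ≠ 0)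
    {s : Set (Gp p)} (h₁ : mk x₁ y₁ ∈ s) (h₂ : mk x₂ y₂ ∈ s) : Subgroup.closure s = ⊤ := by
  refine eq_top_iff.mpr fun g _ => ?_
  obtain ⟨u, v, rfl⟩ : ∃ u v : ZMod p, g = mk u v := ⟨_, _, (mk_toAdd g).symm⟩
  have hg : mk u v = mk x₁ y₁ ^ ((u * y₂ - v * x₂) / (x₁ * y₂ - x₂ * y₁)).val *
      mk x₂ y₂ ^ ((v * x₁ - u * y₁) / (x₁ * y₂ - x₂ * y₁)).val := by
    rw [mk_pow, mk_pow, mk_mul, ZMod.natCast_zmod_val (n := p), ZMod.natCast_zmod_val (n := p),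
      mk_eq_mk]
    constructor
    · linear_combination (-u) * mul_inv_cancel₀ hdet
    · linear_combination (-v) * mul_inv_cancel₀ hdet
  rw [hg]
  exact mul_mem (pow_mem (Subgroup.subset_closure h₁) _) (pow_mem (Subgroup.subset_closure h₂) _)

theorem pow_eq_one_of_pow_eq_pow {x₁ y₁ x₂ y₂ : ZMod p} (hdet : x₁ * y₂ - x₂ * y₁ ≠ 0)
    {j k : ℕ} (h : mk x₁ y₁ ^ j = mk x₂ y₂ ^ k) : mk x₁ y₁ ^ j = 1 := by
  rw [mk_pow, mk_pow, mk_eq_mk] at h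
  have hj : (j : ZMod p) * (x₁ * y₂ - x₂ * y₁) = 0 := by
    linear_combination y₂ * h.1 - x₂ * h.2
  rw [mk_pow, (mul_eq_zero.mp hj).resolve_right hdet, zero_mul, zero_mul, one_eq_mk]

theorem sphSys_mk {x₁ y₁ x₂ y₂ x₃ y₃ : ZMod p} (hx : x₁ + x₂ + x₃ = 0) (hy : y₁ + y₂ + y₃ = 0)
    (hdet : x₁ * y₂ - x₂ * y₁ ≠ 0) :
    SphSys [p, p, p] [mk x₁ y₁, mk x₂ y₂, mk x₃ y₃] := by
  refine ⟨?_, closure_eq_top_of_det hdet (by simp) (by simp), ?_⟩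
  · simp only [List.prod_cons, List.prod_nil, mk_mul, one_eq_mk, mk_eq_mk]
    constructor
    · linear_combination hx
    · linear_combination hy
  · have h₁ : ¬(x₁ = 0 ∧ y₁ = 0) := by
      rintro ⟨rfl, rfl⟩
      exact hdet (by ring)
    have h₂ : ¬(x₂ = 0 ∧ y₂ = 0) := by
      rintro ⟨rfl, rfl⟩
      exact hdet (by ring)
    have h₃ : ¬(x₃ = 0 ∧ y₃ = 0) := by
      rintro ⟨rfl, rfl⟩
      exact hdet (by linear_combination x₁ * hy - y₁ * hx)
    simp [orderOf_mk h₁, orderOf_mk h₂, orderOf_mk h₃]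

def V1 (p : ℕ) : List (Gp p) := [mk 1 0, mk 0 1, mk (-1) (-1)]

theorem sphSys_V1 : SphSys [p, p, p] (V1 p) :=
  sphSys_mk (by ring) (by ring) (by simp)

def ray (z a : ZMod p) : Gp p := mk z (z * a)

theorem ray_inj {z z' a a' : ZMod p} (hz : z ≠ 0) (h : ray z a = ray z' a') :
    z = z' ∧ a = a' := by
  obtain ⟨rfl, h⟩ := mk_eq_mk.mp h
  exact ⟨rfl, mul_left_cancel₀ hz h⟩

theorem pow_eq_one_of_mem_V1 {x : Gp p} (hx : x ∈ V1 p) {z a : ZMod p} (hz : z ≠ 0)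
    (ha₀ : a ≠ 0) (ha₁ : a ≠ 1) {j k : ℕ} (h : x ^ j = ray z a ^ k) : x ^ j = 1 := by
  simp only [V1, List.mem_cons, List.not_mem_nil, or_false] at hx
  rcases hx with rfl | rfl | rfl <;> refine pow_eq_one_of_pow_eq_pow ?_ h
  · simpa using mul_ne_zero hz ha₀
  · simpa using hz
  · have : (-1 : ZMod p) * (z * a) - z * -1 = z * (1 - a) := by ring
    rw [this]
    exact mul_ne_zero hz (sub_ne_zero.mpr ha₁.symm)

-- Slopes of the lines through `0` other than the lines `0`, `∞` and `1` spanned by `V1`.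
abbrev Slope (p : ℕ) := {a : ZMod p // a ≠ 0 ∧ a ≠ 1}

-- The coefficients on the second and third lines are the ones making the three vectors sum to `0`.
noncomputable def rayTriple (s a b c : ZMod p) : List (Gp p) :=
  [ray s a, ray (s * (c - a) / (b - c)) b, ray (s * (a - b) / (b - c)) c]

section RayTriple
variable {s : ZMod p} (hs : s ≠ 0) {a b c : Slope p} (hab : a.1 ≠ b.1) (hac : a.1 ≠ c.1)
  (hbc : b.1 ≠ c.1)
include hs hab hac hbc

theorem rayTriple_coeffs_ne_zero :
    s * (c.1 - a.1) / (b.1 - c.1) ≠ 0 ∧ s * (a.1 - b.1) / (b.1 - c.1) ≠ 0 :=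
  ⟨div_ne_zero (mul_ne_zero hs (sub_ne_zero.mpr hac.symm)) (sub_ne_zero.mpr hbc),
    div_ne_zero (mul_ne_zero hs (sub_ne_zero.mpr hab)) (sub_ne_zero.mpr hbc)⟩

theorem exists_ray_of_mem_rayTriple {y : Gp p} (hy : y ∈ rayTriple s a.1 b.1 c.1) :
    ∃ (z : ZMod p) (e : Slope p), z ≠ 0 ∧ y = ray z e.1 := by
  have ⟨ht, hr⟩ := rayTriple_coeffs_ne_zero hs hab hac hbc
  simp only [rayTriple, List.mem_cons, List.not_mem_nil, or_false] at hy
  rcases hy with rfl | rfl | rfl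
  · exact ⟨s, a, hs, rfl⟩
  · exact ⟨_, b, ht, rfl⟩
  · exact ⟨_, c, hr, rfl⟩

theorem rayTriple_inj {s' a' b' c' : ZMod p}
    (h : rayTriple s a.1 b.1 c.1 = rayTriple s' a' b' c') :
    s = s' ∧ a.1 = a' ∧ b.1 = b' ∧ c.1 = c' := by
  have ⟨ht, hr⟩ := rayTriple_coeffs_ne_zero hs hab hac hbc
  simp only [rayTriple, List.cons.injEq, and_true] at h
  obtain ⟨h₁, h₂, h₃⟩ := h
  obtain ⟨rfl, rfl⟩ := ray_inj hs h₁
  obtain ⟨-, rfl⟩ := ray_inj ht h₂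
  obtain ⟨-, rfl⟩ := ray_inj hr h₃
  exact ⟨rfl, rfl, rfl, rfl⟩

theorem mem_uRam_V1_rayTriple :
    (V1 p, rayTriple s a.1 b.1 c.1) ∈ URam (Gp p) [p, p, p] [p, p, p] := by
  have hbc' := sub_ne_zero.mpr hbc
  have ht := (rayTriple_coeffs_ne_zero hs hab hac hbc).1
  refine ⟨sphSys_V1, sphSys_mk ?_ ?_ ?_, ?_⟩
  · linear_combination (-s) * mul_inv_cancel₀ hbc'
  · linear_combination (-s * a.1) * mul_inv_cancel₀ hbc'
  · intro hdet
    exact mul_ne_zero (mul_ne_zero hs ht) (sub_ne_zero.mpr hab.symm) (by linear_combination hdet)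
  · refine sigmaSet_inter_eq_singleton_one (by simp [V1]) (by simp [rayTriple])
      fun x hx y hy j k h => ?_
    obtain ⟨z, e, hz, rfl⟩ := exists_ray_of_mem_rayTriple hs hab hac hbc hy
    exact pow_eq_one_of_mem_V1 hx hz e.2.1 e.2.2 h

end RayTriple

omit [Fact p.Prime] in
theorem embedding_vals_ne (f : Fin 3 ↪ Slope p) :
    (f 0).1 ≠ (f 1).1 ∧ (f 0).1 ≠ (f 2).1 ∧ (f 1).1 ≠ (f 2).1 := by
  refine ⟨?_, ?_, ?_⟩ <;> exact fun h => absurd (f.injective (Subtype.ext h)) (by decide)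

noncomputable def rayTripleFamily (x : {s : ZMod p // s ≠ 0} × (Fin 3 ↪ Slope p)) :
    {A : URam (Gp p) [p, p, p] [p, p, p] // A.1.1 = V1 p} :=
  ⟨⟨(V1 p, rayTriple x.1 (x.2 0).1 (x.2 1).1 (x.2 2).1),
    mem_uRam_V1_rayTriple x.1.2 (embedding_vals_ne x.2).1 (embedding_vals_ne x.2).2.1
      (embedding_vals_ne x.2).2.2⟩, rfl⟩

theorem rayTripleFamily_injective : Injective (rayTripleFamily (p := p)) := by
  rintro ⟨⟨s, hs⟩, f⟩ ⟨⟨s', hs'⟩, f'⟩ h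
  have h' : rayTriple s (f 0).1 (f 1).1 (f 2).1 = rayTriple s' (f' 0).1 (f' 1).1 (f' 2).1 :=
    congrArg (fun A => A.1.1.2) h
  obtain ⟨hab, hac, hbc⟩ := embedding_vals_ne f
  obtain ⟨rfl, h₀, h₁, h₂⟩ := rayTriple_inj hs hab hac hbc h'
  refine Prod.ext rfl (Function.Embedding.ext fun i => Subtype.ext ?_)
  fin_cases i <;> assumption

theorem card_slope : Fintype.card (Slope p) = p - 2 := by
  classical
  have : (Finset.univ.filter fun a : ZMod p => a ≠ 0 ∧ a ≠ 1) = Finset.univ \ {0, 1} := by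
    ext; simp [not_or]
  rw [Fintype.card_subtype, this, Finset.card_univ_sdiff, ZMod.card, Finset.card_pair zero_ne_one]

theorem card_rayTripleFamily_domain :
    Nat.card ({s : ZMod p // s ≠ 0} × (Fin 3 ↪ Slope p)) = (p - 1) * (p - 2).descFactorial 3 := by
  classical
  rw [Nat.card_prod, Nat.card_eq_fintype_card, Nat.card_eq_fintype_card, Fintype.card_embedding_eq]
  simp [Fintype.card_subtype_compl, card_slope]

theorem card_GL_le_card_mulAut : (p ^ 2 - 1) * (p ^ 2 - p) ≤ Nat.card (Gp p ≃* Gp p) := by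
  let e : Multiplicative (Fin 2 → ZMod p) ≃* Gp p :=
    (AddEquiv.toMultiplicative (LinearEquiv.finTwoArrow (ZMod p) (ZMod p)).toAddEquiv).trans
      (MulEquiv.prodMultiplicative _ _)
  let toMulAut : ((Fin 2 → ZMod p) ≃ₗ[ZMod p] (Fin 2 → ZMod p)) → MulAut (Gp p) :=
    fun f => MulAut.congr e (AddEquiv.toMultiplicative f.toAddEquiv)
  have hinj : Injective toMulAut :=
    (MulAut.congr e).injective.comp <| AddEquiv.toMultiplicative.injective.comp
      fun _ _ h => LinearEquiv.ext (AddEquiv.ext_iff.mp h)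
  calc (p ^ 2 - 1) * (p ^ 2 - p) = Nat.card (GL (Fin 2) (ZMod p)) := by
        rw [Matrix.card_GL_field]
        simp [Fin.prod_univ_two]
    _ = Nat.card ((Fin 2 → ZMod p) ≃ₗ[ZMod p] (Fin 2 → ZMod p)) :=
        Nat.card_congr (Matrix.GeneralLinearGroup.toLin.trans
          (LinearMap.GeneralLinearGroup.generalLinearEquiv _ _)).toEquiv
    _ ≤ Nat.card (Gp p ≃* Gp p) := Nat.card_le_card_of_injective toMulAut hinj

theorem card_uRam_le_pow_eight : Nat.card (URam (Gp p) [p, p, p] [p, p, p]) ≤ p ^ 8 := by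
  refine _root_.card_uRam_le.trans_eq ?_
  rw [Nat.card_prod, Nat.card_congr Multiplicative.toAdd, Nat.card_zmod]
  simp only [List.length_cons, List.length_nil]
  ring

theorem hCount_mul_le_pow_eight :
    hCount (Gp p) [p, p, p] [p, p, p] * ((p ^ 2 - 1) * (p ^ 2 - p)) ≤ p ^ 8 :=
  (Nat.mul_le_mul_left _ card_GL_le_card_mulAut).trans <|
    hCount_mul_card_mulAut_le.trans card_uRam_le_pow_eight

theorem descFactorial_le_hCount_mul :
    (p - 1) * (p - 2).descFactorial 3 ≤ hCount (Gp p) [p, p, p] [p, p, p] * 72 := by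
  rw [← card_rayTripleFamily_domain]
  exact (Nat.card_le_card_of_injective _ rayTripleFamily_injective).trans
    (card_fiber_le_hCount_mul sphSys_V1.2.1)

end Gp

theorem sub_three_pow_four_le_descFactorial {p : ℕ} (hp : 5 ≤ p) :
    (p - 3) ^ 4 ≤ (p - 1) * (p - 2).descFactorial 3 := by
  obtain ⟨q, rfl⟩ := Nat.exists_eq_add_of_le' hp
  have hdesc : (q + 5 - 2).descFactorial 3 = (q + 3) * (q + 2) * (q + 1) := by
    simp [Nat.descFactorial_succ]
    ring
  rw [hdesc, show q + 5 - 1 = q + 4 by omega, show q + 5 - 3 = q + 2 by omega]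
  calc (q + 2) ^ 4 = (q + 2) * (q + 2) * ((q + 2) * (q + 2)) := by ring
    _ ≤ (q + 4) * (q + 1) * ((q + 3) * (q + 2)) := Nat.mul_le_mul (by nlinarith) (by nlinarith)
    _ = _ := by ring

theorem quartic_le_of_descFactorial_le_mul {p h : ℕ} (hp : 5 ≤ p)
    (hh : (p - 1) * (p - 2).descFactorial 3 ≤ h * 72) :
    2 / 9 * (((p : ℝ) - 3) ^ 2 / 4) ^ 2 ≤ h := by
  have hcast : ((p - 3 : ℕ) : ℝ) = p - 3 := by push_cast [Nat.cast_sub (by omega : 3 ≤ p)]; ring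
  have : ((p : ℝ) - 3) ^ 4 ≤ h * 72 := by
    rw [← hcast]
    exact_mod_cast (sub_three_pow_four_le_descFactorial hp).trans hh
  linarith

theorem le_quartic_of_mul_le_pow_eight {p h : ℕ} (hp : 5 ≤ p)
    (hh : h * ((p ^ 2 - 1) * (p ^ 2 - p)) ≤ p ^ 8) :
    (h : ℝ) ≤ 1250 * (((p : ℝ) - 3) ^ 2 / 4) ^ 2 := by
  have hx : (5 : ℝ) ≤ p := by exact_mod_cast hp
  have hcast : (h : ℝ) * (((p : ℝ) ^ 2 - 1) * ((p : ℝ) ^ 2 - p)) ≤ (p : ℝ) ^ 8 := by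
    have := (Nat.cast_le (α := ℝ)).mpr hh
    push_cast [Nat.cast_sub (Nat.one_le_pow 2 p (by omega)),
      Nat.cast_sub (Nat.le_self_pow (by norm_num : 2 ≠ 0) p)] at this
    exact this
  have hGL : (p : ℝ) ^ 4 / 2 ≤ ((p : ℝ) ^ 2 - 1) * ((p : ℝ) ^ 2 - p) := by
    have hq : 0 ≤ (p : ℝ) ^ 2 / 2 - p - 1 := by nlinarith
    nlinarith [mul_nonneg (sq_nonneg (p : ℝ)) hq]
  have hh' : (h : ℝ) ≤ 2 * (p : ℝ) ^ 4 := by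
    have hp4 : (0 : ℝ) < (p : ℝ) ^ 4 := by positivity
    nlinarith [mul_le_mul_of_nonneg_left hGL (Nat.cast_nonneg (α := ℝ) h)]
  have := pow_le_pow_left₀ (by positivity) (by linarith : 2 * (p : ℝ) ≤ 5 * ((p : ℝ) - 3)) 4
  nlinarith

/-- Corollary 4.8: for primes `p ≥ 5`, with `G_p = (ℤ/pℤ)²` and `τ_p = (p,p,p)`,
`h(G_p;τ_p,τ_p) = Θ(χ(G_p;τ_p,τ_p)²)`, where `χ(G_p;τ_p,τ_p) = (p-3)²/4`. -/
theorem stmt14 :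
    ∃ c₁ c₂ : ℝ, 0 < c₁ ∧ 0 < c₂ ∧ ∀ p : ℕ, p.Prime → 5 ≤ p →
      c₁ * (((p : ℝ) - 3) ^ 2 / 4) ^ 2 ≤
        (hCount (Multiplicative (ZMod p) × Multiplicative (ZMod p))
          [p, p, p] [p, p, p] : ℝ) ∧
      (hCount (Multiplicative (ZMod p) × Multiplicative (ZMod p))
          [p, p, p] [p, p, p] : ℝ) ≤
        c₂ * (((p : ℝ) - 3) ^ 2 / 4) ^ 2 := by
  refine ⟨2 / 9, 1250, by norm_num, by norm_num, fun p hp hp5 => ?_⟩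
  have := Fact.mk hp
  exact ⟨quartic_le_of_descFactorial_le_mul hp5 Gp.descFactorial_le_hCount_mul,
    le_quartic_of_mul_le_pow_eight hp5 Gp.hCount_mul_le_pow_eight⟩
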